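/- arXiv:2105.12516 — 2 statements merged into one kernel-verified Lean document; each statement's English description precedes it below -/
import Mathlib

section
/- Let n, m be positive integers, let K be an n×n real symmetric positive-definite matrix, let R be an invertible n×n real matrix with R Rᵀ = K, let Φ be an m×n real matrix, let y ∈ ℝᵐ, and let λ > 0. Define g^Reg := (ΦᵀΦ + λK⁻¹)⁻¹ Φᵀ y and assume g^Reg ≠ 0 and Φ g^Reg ≠ y. Set ρ := λ‖R⁻¹ g^Reg‖ / ‖Φ g^Reg − y‖. Then ρ > 0 and g^Reg is a global minimizer of the function g ↦ ‖Φg − y‖ + ρ‖R⁻¹ g‖ over ℝⁿ. -/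
open Matrix
open scoped BigOperators

/-- Euclidean norm of a real vector. -/
noncomputable def euclNorm {k : ℕ} (v : Fin k → ℝ) : ℝ :=
  Real.sqrt (∑ i, (v i) ^ 2)

/-! The regularised estimate solves the normal equations, which say that the residual
`u₀ = Φ g^Reg - y` and `w₀ = R⁻¹ g^Reg` satisfy `⟪u₀, Φ z⟫ + λ ⟪w₀, R⁻¹ z⟫ = 0` for every `z`.
Taking `z = g - g^Reg` and applying Cauchy–Schwarz gives
`‖u₀‖² + λ ‖w₀‖² ≤ ‖u₀‖ ‖Φ g - y‖ + λ ‖w₀‖ ‖R⁻¹ g‖`, and dividing by `‖u₀‖` is the claimed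
inequality with `ρ = λ ‖w₀‖ / ‖u₀‖`. -/

section EuclNorm

variable {k : ℕ}

lemma euclNorm_eq_norm_toLp (v : Fin k → ℝ) :
    euclNorm v = ‖(WithLp.toLp 2 v : EuclideanSpace ℝ (Fin k))‖ := by
  simp [euclNorm, EuclideanSpace.norm_eq]

lemma dotProduct_self_eq_euclNorm_sq (v : Fin k → ℝ) : v ⬝ᵥ v = euclNorm v ^ 2 := by
  rw [euclNorm_eq_norm_toLp, ← real_inner_self_eq_norm_sq, EuclideanSpace.inner_toLp_toLp]
  rfl

lemma dotProduct_le_euclNorm_mul_euclNorm (v w : Fin k → ℝ) :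
    v ⬝ᵥ w ≤ euclNorm v * euclNorm w := by
  have h := real_inner_le_norm (WithLp.toLp 2 v : EuclideanSpace ℝ (Fin k)) (WithLp.toLp 2 w)
  rwa [EuclideanSpace.inner_toLp_toLp, star_trivial, dotProduct_comm,
    ← euclNorm_eq_norm_toLp, ← euclNorm_eq_norm_toLp] at h

lemma euclNorm_pos {v : Fin k → ℝ} (hv : v ≠ 0) : 0 < euclNorm v := by
  rw [euclNorm_eq_norm_toLp, norm_pos_iff]
  exact fun h => hv (WithLp.toLp_injective 2 (h.trans (WithLp.toLp_zero 2).symm))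

end EuclNorm

lemma add_div_mul_euclNorm_le {k p : ℕ} {u₀ u : Fin k → ℝ} {w₀ w : Fin p → ℝ} {lam : ℝ}
    (hlam : 0 ≤ lam) (hu₀ : u₀ ≠ 0)
    (h : u₀ ⬝ᵥ (u - u₀) + lam * (w₀ ⬝ᵥ (w - w₀)) = 0) :
    euclNorm u₀ + lam * euclNorm w₀ / euclNorm u₀ * euclNorm w₀ ≤
      euclNorm u + lam * euclNorm w₀ / euclNorm u₀ * euclNorm w := by
  have ha := euclNorm_pos hu₀
  rw [← mul_le_mul_iff_right₀ ha]
  calc euclNorm u₀ * (euclNorm u₀ + lam * euclNorm w₀ / euclNorm u₀ * euclNorm w₀)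
      = u₀ ⬝ᵥ u₀ + lam * (w₀ ⬝ᵥ w₀) := by
        rw [dotProduct_self_eq_euclNorm_sq, dotProduct_self_eq_euclNorm_sq]
        field_simp
    _ = u₀ ⬝ᵥ u + lam * (w₀ ⬝ᵥ w) := by
        rw [dotProduct_sub, dotProduct_sub] at h
        linarith
    _ ≤ euclNorm u₀ * euclNorm u + lam * (euclNorm w₀ * euclNorm w) := by
        gcongr
        · exact dotProduct_le_euclNorm_mul_euclNorm u₀ u
        · exact dotProduct_le_euclNorm_mul_euclNorm w₀ w
    _ = euclNorm u₀ * (euclNorm u + lam * euclNorm w₀ / euclNorm u₀ * euclNorm w) := by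
        field_simp

lemma residual_dotProduct_add_mul_dotProduct_eq_zero {ι κ μ : Type*}
    [Fintype ι] [Fintype κ] [Fintype μ]
    (Φ : Matrix ι κ ℝ) (L : Matrix μ κ ℝ) (y : ι → ℝ) (lam : ℝ) {g : κ → ℝ}
    (hg : (Φᵀ * Φ + lam • (Lᵀ * L)) *ᵥ g = Φᵀ *ᵥ y) (z : κ → ℝ) :
    (Φ *ᵥ g - y) ⬝ᵥ (Φ *ᵥ z) + lam * ((L *ᵥ g) ⬝ᵥ (L *ᵥ z)) = 0 := by
  have hgrad : Φᵀ *ᵥ (Φ *ᵥ g - y) + lam • (Lᵀ *ᵥ (L *ᵥ g)) = 0 := by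
    rw [mulVec_sub, mulVec_mulVec, mulVec_mulVec, sub_add_eq_add_sub, ← smul_mulVec,
      ← add_mulVec, hg, sub_self]
  rw [dotProduct_mulVec, dotProduct_mulVec, ← mulVec_transpose, ← mulVec_transpose,
    ← smul_eq_mul, ← smul_dotProduct, ← add_dotProduct, hgrad, zero_dotProduct]

lemma inv_eq_transpose_inv_mul_inv {n : Type*} [Fintype n] [DecidableEq n]
    {K R : Matrix n n ℝ} (hRK : R * Rᵀ = K) : K⁻¹ = (R⁻¹)ᵀ * R⁻¹ := by
  rw [← hRK, Matrix.mul_inv_rev, transpose_nonsing_inv]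

theorem regLS_minimizes_with_explicit_rho_general
    (n m : ℕ)
    (K R : Matrix (Fin n) (Fin n) ℝ) (hK : K.PosDef)
    (hR : IsUnit R.det) (hRK : R * Rᵀ = K)
    (Φ : Matrix (Fin m) (Fin n) ℝ) (y : Fin m → ℝ)
    (lam : ℝ) (hlam : 0 < lam)
    (gReg : Fin n → ℝ)
    (hgReg : gReg = (Φᵀ * Φ + lam • K⁻¹)⁻¹ *ᵥ (Φᵀ *ᵥ y))
    (hg0 : gReg ≠ 0) (hgy : Φ *ᵥ gReg ≠ y)
    (ρ : ℝ)
    (hρ : ρ = lam * euclNorm (R⁻¹ *ᵥ gReg) / euclNorm (Φ *ᵥ gReg - y)) :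
    0 < ρ ∧ ∀ g : Fin n → ℝ,
      euclNorm (Φ *ᵥ gReg - y) + ρ * euclNorm (R⁻¹ *ᵥ gReg) ≤
        euclNorm (Φ *ᵥ g - y) + ρ * euclNorm (R⁻¹ *ᵥ g) := by
  have hM : (Φᵀ * Φ + lam • K⁻¹).PosDef := by
    refine PosDef.posSemidef_add ?_ (hK.inv.smul hlam)
    simpa using posSemidef_conjTranspose_mul_self Φ
  have hnormal : (Φᵀ * Φ + lam • ((R⁻¹)ᵀ * R⁻¹)) *ᵥ gReg = Φᵀ *ᵥ y := by
    rw [← inv_eq_transpose_inv_mul_inv hRK, hgReg, mulVec_mulVec,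
      mul_nonsing_inv _ ((isUnit_iff_isUnit_det _).mp hM.isUnit), one_mulVec]
  have hu₀ : Φ *ᵥ gReg - y ≠ 0 := sub_ne_zero.mpr hgy
  have hw₀ : R⁻¹ *ᵥ gReg ≠ 0 := by
    have hinj := mulVec_injective_iff_isUnit.mpr
      ((isUnit_iff_isUnit_det _).mpr (isUnit_nonsing_inv_det R hR))
    simpa using hinj.ne hg0
  refine ⟨hρ ▸ div_pos (mul_pos hlam (euclNorm_pos hw₀)) (euclNorm_pos hu₀), fun g => ?_⟩
  rw [hρ]
  refine add_div_mul_euclNorm_le hlam.le hu₀ ?_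
  have hstat := residual_dotProduct_add_mul_dotProduct_eq_zero Φ R⁻¹ y lam hnormal (g - gReg)
  rwa [sub_sub_sub_cancel_right, ← mulVec_sub, ← mulVec_sub]

/-- Remark 1: with the explicit radius ρ = λ‖R⁻¹g^Reg‖/‖Φg^Reg − y‖, the
regularized estimate minimizes g ↦ ‖Φg − y‖ + ρ‖R⁻¹g‖. -/
theorem regLS_minimizes_with_explicit_rho
    (n m : ℕ) (hn : 0 < n) (hm : 0 < m)
    (K R : Matrix (Fin n) (Fin n) ℝ) (hK : K.PosDef)
    (hR : IsUnit R.det) (hRK : R * Rᵀ = K)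
    (Φ : Matrix (Fin m) (Fin n) ℝ) (y : Fin m → ℝ)
    (lam : ℝ) (hlam : 0 < lam)
    (gReg : Fin n → ℝ)
    (hgReg : gReg = (Φᵀ * Φ + lam • K⁻¹)⁻¹ *ᵥ (Φᵀ *ᵥ y))
    (hg0 : gReg ≠ 0) (hgy : Φ *ᵥ gReg ≠ y)
    (ρ : ℝ)
    (hρ : ρ = lam * euclNorm (R⁻¹ *ᵥ gReg) / euclNorm (Φ *ᵥ gReg - y)) :
    0 < ρ ∧ ∀ g : Fin n → ℝ,
      euclNorm (Φ *ᵥ gReg - y) + ρ * euclNorm (R⁻¹ *ᵥ gReg) ≤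
        euclNorm (Φ *ᵥ g - y) + ρ * euclNorm (R⁻¹ *ᵥ g) :=
  regLS_minimizes_with_explicit_rho_general n m K R hK hR hRK Φ y lam hlam gReg hgReg hg0 hgy ρ hρ
end

section
/- Let n, m be positive integers, let ρ > 0, let a ∈ ℝⁿ with a ≠ 0, let b ∈ ℝᵐ with b ≠ 0, and let R be an invertible n×n real matrix. If Δ ∈ ℝ^{m×n} satisfies ‖ΔR‖_F ≤ ρ and ‖Δa + b‖ = ‖b‖ + ρ‖R⁻¹a‖, then Δ = (ρ / (‖b‖ · ‖R⁻¹a‖)) · b (R⁻¹a)ᵀ R⁻¹. In particular, the maximizer of ‖Δa + b‖ over {Δ : ‖ΔR‖_F ≤ ρ} is unique. -/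
/-!
Put `y = R⁻¹ a` and `B = Δ R`, so that `Δ a = B y` and `‖B‖_F ≤ ρ`. Expanding
`‖B y + b‖² = (‖b‖ + ρ‖y‖)²` against `‖B y‖ ≤ ‖B‖_F ‖y‖ ≤ ρ‖y‖` forces `⟪B y, b⟫ = ρ‖b‖‖y‖`.
In the Frobenius inner product `⟪B, b yᵀ⟫_F = ⟪B y, b⟫` and `‖b yᵀ‖_F = ‖b‖‖y‖`, so `B` attains
equality in Cauchy–Schwarz against `b yᵀ` with `‖B‖_F ≤ ρ`, hence is the multiple
`ρ / (‖b‖‖y‖) • b yᵀ`.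
-/

open Matrix
open scoped BigOperators

/-- Frobenius norm of a real matrix. -/
noncomputable def frobNorm {m n : ℕ} (A : Matrix (Fin m) (Fin n) ℝ) : ℝ :=
  Real.sqrt (∑ i, ∑ j, (A i j) ^ 2)

section InnerProductSpace

variable {F : Type*} [NormedAddCommGroup F] [InnerProductSpace ℝ F]

theorem inner_eq_mul_norm_of_norm_add_eq {v b : F} {r : ℝ} (hv : ‖v‖ ≤ r)
    (h : ‖v + b‖ = ‖b‖ + r) : inner ℝ v b = r * ‖b‖ := by
  have hexpand := norm_add_sq_real v b
  have hcs := real_inner_le_norm v b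
  rw [h] at hexpand
  nlinarith [norm_nonneg v, norm_nonneg b]

theorem eq_smul_of_norm_le_of_mul_norm_le_inner {x u : F} {ρ : ℝ} (hu : u ≠ 0)
    (hx : ‖x‖ ≤ ρ) (h : ρ * ‖u‖ ≤ inner ℝ x u) : x = (ρ / ‖u‖) • u := by
  have hu_pos : 0 < ‖u‖ := norm_pos_iff.2 hu
  have hcs := real_inner_le_norm x u
  have hx_eq : ‖x‖ = ρ := le_antisymm hx (le_of_mul_le_mul_right (h.trans hcs) hu_pos)
  have hparallel : ‖u‖ • x = ρ • u :=
    hx_eq ▸ inner_eq_norm_mul_iff_real.1 (le_antisymm hcs (hx_eq ▸ h))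
  rw [div_eq_inv_mul, mul_smul, ← hparallel, inv_smul_smul₀ hu_pos.ne']

end InnerProductSpace

namespace Matrix

variable {m n : Type*}

/-- A matrix as the `ℓ²`-family of its rows; this carries the Frobenius inner product. -/
noncomputable def frobeniusRows (B : Matrix m n ℝ) : PiLp 2 (fun _ : m => EuclideanSpace ℝ n) :=
  WithLp.toLp 2 fun i => WithLp.toLp 2 (B i)

theorem frobeniusRows_injective : Function.Injective (frobeniusRows : Matrix m n ℝ → _) := by
  intro A B h
  ext i j
  simpa [frobeniusRows] using congrArg (fun M => M i j) h

theorem frobeniusRows_smul (c : ℝ) (B : Matrix m n ℝ) :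
    frobeniusRows (c • B) = c • frobeniusRows B := by
  ext i j
  simp [frobeniusRows]

theorem frobeniusRows_vecMulVec (u : m → ℝ) (y : n → ℝ) :
    frobeniusRows (vecMulVec u y) = WithLp.toLp 2 fun i => u i • WithLp.toLp 2 y := by
  ext i j
  simp [frobeniusRows, vecMulVec_apply]

variable [Fintype m] [Fintype n]

theorem inner_frobeniusRows_vecMulVec (B : Matrix m n ℝ) (u : m → ℝ) (y : n → ℝ) :
    inner ℝ (frobeniusRows B) (frobeniusRows (vecMulVec u y)) =
      inner ℝ (WithLp.toLp 2 (B *ᵥ y) : EuclideanSpace ℝ m) (WithLp.toLp 2 u) := by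
  rw [frobeniusRows_vecMulVec]
  simp [frobeniusRows, PiLp.inner_apply, inner_smul_right, mulVec, dotProduct, mul_comm]

theorem norm_frobeniusRows_vecMulVec (u : m → ℝ) (y : n → ℝ) :
    ‖frobeniusRows (vecMulVec u y)‖ =
      ‖(WithLp.toLp 2 u : EuclideanSpace ℝ m)‖ * ‖(WithLp.toLp 2 y : EuclideanSpace ℝ n)‖ := by
  refine (pow_left_inj₀ (norm_nonneg _) (by positivity) two_ne_zero).1 ?_
  rw [frobeniusRows_vecMulVec, PiLp.norm_sq_eq_of_L2, mul_pow,
    EuclideanSpace.norm_sq_eq (WithLp.toLp 2 u), Finset.sum_mul]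
  simp [norm_smul, mul_pow]

theorem norm_mulVec_le_norm_frobeniusRows_mul (B : Matrix m n ℝ) (y : n → ℝ) :
    ‖(WithLp.toLp 2 (B *ᵥ y) : EuclideanSpace ℝ m)‖ ≤
      ‖frobeniusRows B‖ * ‖(WithLp.toLp 2 y : EuclideanSpace ℝ n)‖ := by
  set v : EuclideanSpace ℝ m := WithLp.toLp 2 (B *ᵥ y)
  -- Cauchy–Schwarz for `B` against `(B y) yᵀ` gives `‖B y‖² ≤ ‖B‖_F ‖B y‖ ‖y‖`.
  have hcs := real_inner_le_norm (frobeniusRows B) (frobeniusRows (vecMulVec (B *ᵥ y) y))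
  rw [inner_frobeniusRows_vecMulVec, norm_frobeniusRows_vecMulVec,
    real_inner_self_eq_norm_mul_norm] at hcs
  rcases (norm_nonneg v).eq_or_lt with hv | hv
  · rw [← hv]
    positivity
  · exact le_of_mul_le_mul_right (by linarith) hv

theorem eq_smul_vecMulVec_of_norm_mulVec_add_eq {B : Matrix m n ℝ} {u : m → ℝ} {y : n → ℝ}
    {ρ : ℝ} (hu : u ≠ 0) (hy : y ≠ 0) (hB : ‖frobeniusRows B‖ ≤ ρ)
    (h : ‖(WithLp.toLp 2 (B *ᵥ y + u) : EuclideanSpace ℝ m)‖ =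
      ‖(WithLp.toLp 2 u : EuclideanSpace ℝ m)‖ + ρ * ‖(WithLp.toLp 2 y : EuclideanSpace ℝ n)‖) :
    B = (ρ / (‖(WithLp.toLp 2 u : EuclideanSpace ℝ m)‖ *
      ‖(WithLp.toLp 2 y : EuclideanSpace ℝ n)‖)) • vecMulVec u y := by
  have hBy : ‖(WithLp.toLp 2 (B *ᵥ y) : EuclideanSpace ℝ m)‖ ≤
      ρ * ‖(WithLp.toLp 2 y : EuclideanSpace ℝ n)‖ :=
    (norm_mulVec_le_norm_frobeniusRows_mul B y).trans (by gcongr)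
  have hinner := inner_eq_mul_norm_of_norm_add_eq hBy (by rwa [← WithLp.toLp_add])
  have hrank_one_ne : frobeniusRows (vecMulVec u y) ≠ 0 := by
    rw [← norm_pos_iff, norm_frobeniusRows_vecMulVec]
    exact mul_pos (norm_pos_iff.2 (by simpa using hu)) (norm_pos_iff.2 (by simpa using hy))
  apply frobeniusRows_injective
  rw [frobeniusRows_smul, ← norm_frobeniusRows_vecMulVec]
  refine eq_smul_of_norm_le_of_mul_norm_le_inner hrank_one_ne hB (le_of_eq ?_)
  rw [inner_frobeniusRows_vecMulVec, hinner, norm_frobeniusRows_vecMulVec]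
  ring

end Matrix

theorem euclNorm_eq_norm {k : ℕ} (v : Fin k → ℝ) :
    euclNorm v = ‖(WithLp.toLp 2 v : EuclideanSpace ℝ (Fin k))‖ := by
  simp [euclNorm, EuclideanSpace.norm_eq]

theorem frobNorm_eq_norm_frobeniusRows {m n : ℕ} (A : Matrix (Fin m) (Fin n) ℝ) :
    frobNorm A = ‖frobeniusRows A‖ := by
  rw [frobNorm, PiLp.norm_eq_of_L2]
  congr 1
  refine Finset.sum_congr rfl fun i _ => ?_
  simp [frobeniusRows, EuclideanSpace.norm_sq_eq]

theorem robust_inner_problem_unique_maximizer_general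
    (n m : ℕ)
    (ρ : ℝ)
    (a : Fin n → ℝ) (ha : a ≠ 0) (b : Fin m → ℝ) (hb : b ≠ 0)
    (R : Matrix (Fin n) (Fin n) ℝ) (hR : IsUnit R.det)
    (Δ : Matrix (Fin m) (Fin n) ℝ)
    (hΔ : frobNorm (Δ * R) ≤ ρ)
    (hmax : euclNorm (Δ *ᵥ a + b) = euclNorm b + ρ * euclNorm (R⁻¹ *ᵥ a)) :
    Δ = (ρ / (euclNorm b * euclNorm (R⁻¹ *ᵥ a))) •
      (vecMulVec b (R⁻¹ *ᵥ a) * R⁻¹) := by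
  have hΔa : (Δ * R) *ᵥ (R⁻¹ *ᵥ a) = Δ *ᵥ a := by
    rw [mulVec_mulVec, Matrix.mul_assoc, mul_nonsing_inv R hR, Matrix.mul_one]
  have hy : R⁻¹ *ᵥ a ≠ 0 := fun hy => ha <| by
    rw [← one_mulVec a, ← mul_nonsing_inv R hR, ← mulVec_mulVec, hy, mulVec_zero]
  rw [frobNorm_eq_norm_frobeniusRows] at hΔ
  simp only [euclNorm_eq_norm] at hmax ⊢
  rw [← hΔa] at hmax
  rw [← smul_mul, ← eq_smul_vecMulVec_of_norm_mulVec_add_eq hb hy hΔ hmax,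
    Matrix.mul_assoc, mul_nonsing_inv R hR, Matrix.mul_one]

/-- Uniqueness of the maximizer in Lemma 2 (case b ≠ 0): any Δ in the
uncertainty set attaining the value ‖b‖ + ρ‖R⁻¹a‖ must be the rank-one matrix
(ρ/(‖b‖‖R⁻¹a‖)) b (R⁻¹a)ᵀ R⁻¹. -/
theorem robust_inner_problem_unique_maximizer
    (n m : ℕ) (hn : 0 < n) (hm : 0 < m)
    (ρ : ℝ) (hρ : 0 < ρ)
    (a : Fin n → ℝ) (ha : a ≠ 0) (b : Fin m → ℝ) (hb : b ≠ 0)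
    (R : Matrix (Fin n) (Fin n) ℝ) (hR : IsUnit R.det)
    (Δ : Matrix (Fin m) (Fin n) ℝ)
    (hΔ : frobNorm (Δ * R) ≤ ρ)
    (hmax : euclNorm (Δ *ᵥ a + b) = euclNorm b + ρ * euclNorm (R⁻¹ *ᵥ a)) :
    Δ = (ρ / (euclNorm b * euclNorm (R⁻¹ *ᵥ a))) •
      (vecMulVec b (R⁻¹ *ᵥ a) * R⁻¹) :=
  robust_inner_problem_unique_maximizer_general n m ρ a ha b hb R hR Δ hΔ hmax
end
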